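/- arXiv:1908.00844 — 3 statements merged into one kernel-verified Lean document; each statement's English description precedes it below -/
import Mathlib

section
/- Let z > -1, λ ∈ (0,1], and suppose Δ satisfies |Δ| ≤ λ·|min{z,1}| and sign(Δ) = sign(min{z,1}). Let b ≥ 0 and p > 0 satisfy b - p = p·z (i.e., b = p(1+z)). Then p·z·Δ ≥ (1/(2λ))·b·Δ^2. -/
/-! Since `Δ` has the sign of `z`, `p z Δ = p |z| |Δ|` and `b Δ² = p (1 + z) |Δ|²`, so after
cancelling `p |Δ|` the claim reads `(1 + z) |Δ| ≤ 2 λ |z|`. This follows from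
`|Δ| ≤ λ |min z 1|` and the elementary bound `(1 + z) |min z 1| ≤ 2 |z|`. -/

namespace Real

theorem mul_nonneg_of_sign_eq {x y : ℝ} (h : sign x = sign y) : 0 ≤ x * y := by
  rcases lt_trichotomy x 0 with hx | rfl | hx <;> rcases lt_trichotomy y 0 with hy | rfl | hy <;>
    simp only [sign_of_neg, sign_of_pos, sign_zero, *] at h <;>
    nlinarith

theorem sign_min_of_pos {c : ℝ} (hc : 0 < c) (z : ℝ) : sign (min z c) = sign z := by
  rcases lt_trichotomy z 0 with hz | rfl | hz
  · rw [min_eq_left (by linarith)]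
  · rw [min_eq_left hc.le]
  · rw [sign_of_pos hz, sign_of_pos (lt_min hz hc)]

end Real

theorem one_add_mul_abs_min_one_le (z : ℝ) : (1 + z) * |min z 1| ≤ 2 * |z| := by
  rcases le_total z 0 with hz0 | hz0
  · rw [min_eq_left (by linarith), abs_of_nonpos hz0]
    nlinarith
  · rw [abs_of_nonneg (le_min hz0 zero_le_one), abs_of_nonneg hz0]
    rcases le_total z 1 with hz1 | hz1
    · rw [min_eq_left hz1]; nlinarith
    · rw [min_eq_right hz1]; linarith

theorem progress_claim_general (z lam Δ b p : ℝ) (hz : -1 < z) (hl0 : 0 < lam)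
    (hΔ : |Δ| ≤ lam * |min z 1|) (hsign : Real.sign Δ = Real.sign (min z 1))
    (hp : 0 < p) (hbp : b - p = p * z) :
    p * z * Δ ≥ (1 / (2 * lam)) * b * Δ ^ 2 := by
  have hb : b = p * (1 + z) := by linarith
  have hzΔ : z * Δ = |z| * |Δ| := by
    rw [← abs_mul, abs_of_nonneg]
    exact Real.mul_nonneg_of_sign_eq (by rw [hsign, Real.sign_min_of_pos one_pos])
  calc 1 / (2 * lam) * b * Δ ^ 2 = p * (1 + z) * |Δ| * |Δ| / (2 * lam) := by
        rw [hb, ← sq_abs]; ring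
    _ ≤ p * (1 + z) * |Δ| * (lam * |min z 1|) / (2 * lam) := by
        have : 0 ≤ 1 + z := by linarith
        gcongr
    _ = p * |Δ| * ((1 + z) * |min z 1|) / 2 := by
        field_simp
    _ ≤ p * |Δ| * (2 * |z|) / 2 := by
        gcongr p * |Δ| * ?_ / 2
        exact one_add_mul_abs_min_one_le z
    _ = p * z * Δ := by
        rw [mul_assoc p z, hzΔ]; ring

theorem progress_claim (z lam Δ b p : ℝ) (hz : -1 < z) (hl0 : 0 < lam) (hl1 : lam ≤ 1)
    (hΔ : |Δ| ≤ lam * |min z 1|) (hsign : Real.sign Δ = Real.sign (min z 1))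
    (hb : 0 ≤ b) (hp : 0 < p) (hbp : b - p = p * z) :
    p * z * Δ ≥ (1 / (2 * lam)) * b * Δ ^ 2 :=
  progress_claim_general z lam Δ b p hz hl0 hΔ hsign hp hbp
end

section
/- Let z ≤ 0, C > 0, x ≥ 0, p > 0, r > 0 with r ≤ p. Define I(p') = z(p' - p) - C·x·(p' - p)^2/p, and suppose the unconstrained maximizer p_opt = p + z·p/(2Cx) (when x > 0) satisfies p_opt ≥ r. Then max over p' of I(p'), which equals z^2·p/(4Cx), is at most (1/2)·z·p·log(r/p). -/
/-! The tangent-line bound `log t ≤ t - 1` gives `log (r / p) ≤ (r - p) / p`, and the hypothesis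
on the unconstrained maximizer says `(r - p) / p ≤ z / (2 C x)`. Multiplying by `z p / 2 ≤ 0`
reverses the inequality and yields exactly `z² p / (4 C x)`. -/

open Real

lemma Real.log_div_le_sub_div {r p : ℝ} (hr : 0 < r) (hp : 0 < p) :
    log (r / p) ≤ (r - p) / p := by
  rw [sub_div, div_self hp.ne']
  exact log_le_sub_one_of_pos (div_pos hr hp)

theorem reserve_case1_general (z C x p r : ℝ) (hz : z ≤ 0) (hC : 0 < C) (hx : 0 < x)
    (hp : 0 < p) (hr : 0 < r)
    (hopt : p + z * p / (2 * C * x) ≥ r) :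
    z ^ 2 * p / (4 * C * x) ≤ (1 / 2) * z * p * Real.log (r / p) := by
  have hCx : 0 < 2 * C * x := by positivity
  have hratio : (r - p) / p ≤ z / (2 * C * x) := by
    rw [div_le_div_iff₀ hp hCx, ← le_div_iff₀ hCx]
    linarith
  have hlog : log (r / p) ≤ z / (2 * C * x) := (log_div_le_sub_div hr hp).trans hratio
  calc z ^ 2 * p / (4 * C * x) = (1 / 2) * z * p * (z / (2 * C * x)) := by
        field_simp; ring
    _ ≤ (1 / 2) * z * p * log (r / p) :=
        mul_le_mul_of_nonpos_left hlog (mul_nonpos_of_nonpos_of_nonneg (by linarith) hp.le)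

theorem reserve_case1 (z C x p r : ℝ) (hz : z ≤ 0) (hC : 0 < C) (hx : 0 < x)
    (hp : 0 < p) (hr : 0 < r) (hrp : r ≤ p)
    (hopt : p + z * p / (2 * C * x) ≥ r) :
    z ^ 2 * p / (4 * C * x) ≤ (1 / 2) * z * p * Real.log (r / p) :=
  reserve_case1_general z C x p r hz hC hx hp hr hopt
end

section
/- Let ε > 0, θ > 0, λ ∈ (0,1], and let p > 0, z ≥ -1, Δ with |Δ| ≤ λ·|min{z,1}| and sign(Δ) = sign(min{z,1}). Then 2ε·p·|Δ| ≤ 2θ·p·z·Δ + 2(λε^2/θ)·p. -/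
/-!
Write `m = min z 1`. The sign condition makes `m * Δ = |m| * |Δ|` nonnegative, and `m * Δ ≤ z * Δ`.
If `ε ≤ θ |m|`, then `ε |Δ| ≤ θ m Δ`; otherwise `|Δ| ≤ λ |m| < λ ε / θ`, so `ε |Δ| ≤ λ ε² / θ`.
-/

lemma Real.mul_nonneg_of_sign_eq_s17 {x y : ℝ} (h : Real.sign x = Real.sign y) : 0 ≤ x * y := by
  have hx := Real.sign_mul_nonneg x
  have hy := Real.sign_mul_nonneg y
  rcases Real.sign_apply_eq x with hs | hs | hs
  · rw [hs] at hx
    rw [← h, hs] at hy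
    nlinarith
  · rw [Real.sign_eq_zero_iff.mp hs, zero_mul]
  · rw [hs] at hx
    rw [← h, hs] at hy
    nlinarith

lemma min_mul_le_mul_of_nonneg {z c Δ : ℝ} (hc : 0 < c) (h : 0 ≤ min z c * Δ) :
    min z c * Δ ≤ z * Δ := by
  rcases le_total z c with hzc | hcz
  · rw [min_eq_left hzc]
  · rw [min_eq_right hcz] at h ⊢
    exact mul_le_mul_of_nonneg_right hcz (nonneg_of_mul_nonneg_right h hc)

lemma mul_abs_le_of_abs_le_of_sign_eq {ε θ lam m Δ : ℝ} (hθ : 0 < θ) (hlam : 0 ≤ lam)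
    (hΔ : |Δ| ≤ lam * |m|) (hsign : Real.sign Δ = Real.sign m) :
    ε * |Δ| ≤ θ * (m * Δ) + lam * ε ^ 2 / θ := by
  have hmΔ : m * Δ = |m| * |Δ| := by
    rw [← abs_mul, abs_of_nonneg (Real.mul_nonneg_of_sign_eq_s17 hsign.symm)]
  rcases le_or_gt ε (θ * |m|) with hsmall | hlarge
  · calc ε * |Δ| ≤ θ * |m| * |Δ| := mul_le_mul_of_nonneg_right hsmall (abs_nonneg Δ)
      _ = θ * (m * Δ) := by rw [hmΔ, mul_assoc]
      _ ≤ θ * (m * Δ) + lam * ε ^ 2 / θ := le_add_of_nonneg_right (by positivity)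
  · have hε : 0 < ε := lt_of_le_of_lt (by positivity) hlarge
    have hm : |m| ≤ ε / θ := by rw [le_div_iff₀ hθ]; linarith
    calc ε * |Δ| ≤ ε * (lam * (ε / θ)) :=
          mul_le_mul_of_nonneg_left (hΔ.trans (mul_le_mul_of_nonneg_left hm hlam)) hε.le
      _ = lam * ε ^ 2 / θ := by ring
      _ ≤ θ * (m * Δ) + lam * ε ^ 2 / θ := le_add_of_nonneg_left (by rw [hmΔ]; positivity)

theorem error_term_bound_general (ε θ lam p z Δ : ℝ) (hθ : 0 < θ)
    (hl0 : 0 < lam) (hp : 0 < p)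
    (hΔ : |Δ| ≤ lam * |min z 1|) (hsign : Real.sign Δ = Real.sign (min z 1)) :
    2 * ε * p * |Δ| ≤ 2 * θ * p * z * Δ + 2 * (lam * ε ^ 2 / θ) * p := by
  have hbound := mul_abs_le_of_abs_le_of_sign_eq (ε := ε) hθ hl0.le hΔ hsign
  have hmin := min_mul_le_mul_of_nonneg one_pos (Real.mul_nonneg_of_sign_eq_s17 hsign.symm)
  calc 2 * ε * p * |Δ| = 2 * p * (ε * |Δ|) := by ring
    _ ≤ 2 * p * (θ * (min z 1 * Δ) + lam * ε ^ 2 / θ) := by gcongr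
    _ ≤ 2 * p * (θ * (z * Δ) + lam * ε ^ 2 / θ) := by gcongr
    _ = 2 * θ * p * z * Δ + 2 * (lam * ε ^ 2 / θ) * p := by ring

theorem error_term_bound (ε θ lam p z Δ : ℝ) (hε : 0 < ε) (hθ : 0 < θ)
    (hl0 : 0 < lam) (hl1 : lam ≤ 1) (hp : 0 < p) (hz : -1 ≤ z)
    (hΔ : |Δ| ≤ lam * |min z 1|) (hsign : Real.sign Δ = Real.sign (min z 1)) :
    2 * ε * p * |Δ| ≤ 2 * θ * p * z * Δ + 2 * (lam * ε ^ 2 / θ) * p :=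
  error_term_bound_general ε θ lam p z Δ hθ hl0 hp hΔ hsign
end
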